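/- Let H be a complex Hilbert space, (u_n)_{n≥1} an orthonormal (Hilbert) basis of H, T a bounded bijective linear operator on H, and set g_n := T u_n (so (g_n) is a Riesz basis for H). Let (g̃_n)_{n≥1} be a sequence in H biorthogonal to (g_n) (⟨g_m, g̃_n⟩ = 1 if m = n and 0 otherwise) such that every f ∈ H satisfies f = Σ_{n=1}^∞ ⟨f, g̃_n⟩ g_n with convergence in H. Let (e_n)_{n≥1} be a frame for H, let β ∈ (0,1], γ > 0, C > 0 with |⟨e_m, g_n⟩| ≤ C·e^{−γ|m−n|^β} and |⟨e_m, g̃_n⟩| ≤ C·e^{−γ|m−n|^β} for all m, n. Let μ be a β_μ-sub-exponential weight with β_μ < β and μ(n) ≥ 1 for all n ∈ ℕ, and let p ∈ [1,∞). Then there exists K > 0 such that for every square-summable complex sequence (c_n)_{n≥1} with Σ_n |c_n|^p μ(n)^p < ∞: the series Σ_{n=1}^∞ c_n e_n converges in H to some element y, and Σ_m |⟨y, g̃_m⟩|^p μ(m)^p ≤ K^p · Σ_n |c_n|^p μ(n)^p. That is, the synthesis operator T_E maps ℓ^p_μ boundedly into H_G^{ℓ^p_μ}. -/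

import Mathlib

/-!
The upper frame bound makes `(e_n)` a Bessel sequence, so `y = Σ c_n e_n` converges for
`c ∈ ℓ²`, and `|⟨y, g̃_m⟩| ≤ C Σ_n |c_n| e^{-γ|m-n|^β}`. Since `β_μ < β`, the sub-exponential
weight is absorbed by half of the decay: `e^{-γ|t|^β} μ(t + x) ≤ L e^{-(γ/2)|t|^β} μ(x)`.
Hence `(⟨y, g̃_m⟩ μ(m+1))_m` is dominated by the convolution of `(|c_n| μ(n+1))_n` with the
summable kernel `C L e^{-(γ/2)|z|^β}` on `ℤ`, and the discrete Young (Schur) inequality bounds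
its `ℓ^p` norm by the `ℓ¹` norm of the kernel times the `ℓ^p_μ` norm of `c`.
-/

open Filter Real MeasureTheory
open scoped ENNReal

theorem isBigO_exp_neg_mul_rpow_atTop {δ β : ℝ} (hδ : 0 < δ) (hβ : 0 < β) (s : ℝ) :
    (fun x : ℝ => exp (-δ * x ^ β)) =O[atTop] fun x => x ^ s := by
  refine ((isLittleO_exp_neg_mul_rpow_atTop hδ (s / β)).comp_tendsto
    (tendsto_rpow_atTop hβ)).isBigO.congr' EventuallyEq.rfl ?_
  filter_upwards [eventually_ge_atTop 0] with x hx
  rw [Function.comp_apply, ← rpow_mul hx, mul_div_cancel₀ s hβ.ne']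

theorem summable_exp_neg_mul_abs_int_rpow {δ β : ℝ} (hδ : 0 < δ) (hβ : 0 < β) :
    Summable fun z : ℤ => exp (-δ * |(z : ℝ)| ^ β) := by
  have hnat : Summable fun n : ℕ => exp (-δ * (n : ℝ) ^ β) :=
    summable_of_isBigO_nat (summable_nat_rpow.mpr (by norm_num : (-2 : ℝ) < -1))
      ((isBigO_exp_neg_mul_rpow_atTop hδ hβ (-2)).comp_tendsto tendsto_natCast_atTop_atTop)
  exact .of_nat_of_neg (by simpa using hnat) (by simpa using hnat)

theorem exists_mul_rpow_le_mul_rpow_add {a b r s : ℝ} (ha : 0 < a) (hr : 0 < r) (hrs : r < s) :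
    ∃ M, ∀ x, 0 ≤ x → b * x ^ r ≤ a * x ^ s + M := by
  set R := max 1 ((|b| / a) ^ (s - r)⁻¹)
  refine ⟨|b| * R ^ r, fun x hx => ?_⟩
  have hb : b * x ^ r ≤ |b| * x ^ r := by gcongr; exact le_abs_self b
  rcases le_total x R with hxR | hRx
  · have : |b| * x ^ r ≤ |b| * R ^ r := by gcongr
    have : 0 ≤ a * x ^ s := by positivity
    linarith
  · have hx₀ : 0 < x := (zero_lt_one.trans_le (le_max_left _ _)).trans_le hRx
    have hbx : |b| / a ≤ x ^ (s - r) := by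
      have := rpow_le_rpow (by positivity) ((le_max_right _ _).trans hRx) (sub_pos.mpr hrs).le
      rwa [← rpow_mul (by positivity), inv_mul_cancel₀ (sub_pos.mpr hrs).ne', rpow_one] at this
    have : |b| * x ^ r ≤ a * x ^ s :=
      calc |b| * x ^ r = a * (|b| / a) * x ^ r := by field_simp
        _ ≤ a * x ^ (s - r) * x ^ r := by gcongr
        _ = a * x ^ s := by rw [mul_assoc, ← rpow_add hx₀, sub_add_cancel]
    have : 0 ≤ |b| * R ^ r := by positivity
    linarith

theorem exists_exp_neg_rpow_mul_le_of_subexponential {μ : ℝ → ℝ} {Cμ γ' βμ β γ : ℝ}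
    (hμ : ∀ x, 0 < μ x) (hCμ : 0 < Cμ) (hβμ : 0 < βμ) (hβμβ : βμ < β) (hγ : 0 < γ)
    (hsub : ∀ t x, μ (t + x) ≤ Cμ * exp (γ' * |t| ^ βμ) * μ x) :
    ∃ L > 0, ∀ t x, exp (-γ * |t| ^ β) * μ (t + x) ≤ L * exp (-(γ / 2) * |t| ^ β) * μ x := by
  obtain ⟨M, hM⟩ := exists_mul_rpow_le_mul_rpow_add (b := γ') (half_pos hγ) hβμ hβμβ
  refine ⟨Cμ * exp M, by positivity, fun t x => ?_⟩
  have hexp : exp (-γ * |t| ^ β) * exp (γ' * |t| ^ βμ) ≤ exp M * exp (-(γ / 2) * |t| ^ β) := by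
    rw [← exp_add, ← exp_add, exp_le_exp]
    linarith [hM |t| (abs_nonneg t)]
  calc exp (-γ * |t| ^ β) * μ (t + x)
      ≤ exp (-γ * |t| ^ β) * (Cμ * exp (γ' * |t| ^ βμ) * μ x) := by gcongr; exact hsub t x
    _ = Cμ * μ x * (exp (-γ * |t| ^ β) * exp (γ' * |t| ^ βμ)) := by ring
    _ ≤ Cμ * μ x * (exp M * exp (-(γ / 2) * |t| ^ β)) := by
        have := (hμ x).le; gcongr
    _ = Cμ * exp M * exp (-(γ / 2) * |t| ^ β) * μ x := by ring

theorem mul_le_mul_exp_neg_rpow_of_le {μ : ℝ → ℝ} {a C L γ β s t : ℝ} (hμ : ∀ x, 0 < μ x)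
    (hC : 0 ≤ C)
    (hμL : ∀ t x, exp (-γ * |t| ^ β) * μ (t + x) ≤ L * exp (-(γ / 2) * |t| ^ β) * μ x)
    (ha : a ≤ C * exp (-γ * |t - s| ^ β)) :
    a * μ s ≤ C * L * exp (-(γ / 2) * |s - t| ^ β) * μ t := by
  have hμs := hμL (s - t) t
  rw [sub_add_cancel] at hμs
  calc a * μ s ≤ C * (exp (-γ * |s - t| ^ β) * μ s) := by
        rw [abs_sub_comm, ← mul_assoc]; exact mul_le_mul_of_nonneg_right ha (hμ s).le
    _ ≤ C * (L * exp (-(γ / 2) * |s - t| ^ β) * μ t) := mul_le_mul_of_nonneg_left hμs hC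
    _ = C * L * exp (-(γ / 2) * |s - t| ^ β) * μ t := by ring

namespace ENNReal

theorem rpow_tsum_mul_le {ι : Type*} (w x : ι → ℝ≥0∞) {p : ℝ} (hp : 1 ≤ p) :
    (∑' n, w n * x n) ^ p ≤ (∑' n, w n) ^ (p - 1) * ∑' n, w n * x n ^ p := by
  have hp₀ : 0 < p := zero_lt_one.trans_le hp
  have hθ : 0 ≤ 1 - p⁻¹ := sub_nonneg.mpr (inv_le_one_of_one_le₀ hp)
  let _ : MeasurableSpace ι := ⊤
  -- Hölder for the counting measure, with exponents `1/p` and `1 - 1/p`, on `w x^p` and `w`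
  have holder := lintegral_mul_norm_pow_le (μ := Measure.count)
    (f := fun n => w n * x n ^ p) (g := w) Measurable.of_discrete.aemeasurable
    Measurable.of_discrete.aemeasurable (inv_nonneg.mpr hp₀.le) hθ (by ring)
  simp only [lintegral_count] at holder
  have hterm : ∀ n, (w n * x n ^ p) ^ p⁻¹ * w n ^ (1 - p⁻¹) = w n * x n := by
    intro n
    rw [mul_rpow_of_nonneg _ _ (inv_nonneg.mpr hp₀.le), ← rpow_mul, mul_inv_cancel₀ hp₀.ne',
      rpow_one, mul_right_comm, ← rpow_add_of_nonneg _ _ (inv_nonneg.mpr hp₀.le) hθ,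
      add_sub_cancel, rpow_one]
  simp only [hterm] at holder
  calc (∑' n, w n * x n) ^ p
      ≤ ((∑' n, w n * x n ^ p) ^ p⁻¹ * (∑' n, w n) ^ (1 - p⁻¹)) ^ p :=
        rpow_le_rpow holder hp₀.le
    _ = (∑' n, w n) ^ (p - 1) * ∑' n, w n * x n ^ p := by
        rw [mul_rpow_of_nonneg _ _ hp₀.le, ← rpow_mul, ← rpow_mul, inv_mul_cancel₀ hp₀.ne',
          rpow_one, sub_mul, one_mul, inv_mul_cancel₀ hp₀.ne', mul_comm]

theorem tsum_rpow_tsum_mul_le {ι κ : Type*} (w : ι → κ → ℝ≥0∞) (a : κ → ℝ≥0∞) {W : ℝ≥0∞}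
    (hrow : ∀ m, ∑' n, w m n ≤ W) (hcol : ∀ n, ∑' m, w m n ≤ W) {p : ℝ} (hp : 1 ≤ p) :
    ∑' m, (∑' n, w m n * a n) ^ p ≤ W ^ p * ∑' n, a n ^ p := by
  calc ∑' m, (∑' n, w m n * a n) ^ p
      ≤ ∑' m, W ^ (p - 1) * ∑' n, w m n * a n ^ p := by
        refine ENNReal.tsum_le_tsum fun m => (rpow_tsum_mul_le (w m) a hp).trans ?_
        gcongr
        exact hrow m
    _ = W ^ (p - 1) * ∑' n, (∑' m, w m n) * a n ^ p := by
        rw [ENNReal.tsum_mul_left, ENNReal.tsum_comm]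
        simp only [ENNReal.tsum_mul_right]
    _ ≤ W ^ (p - 1) * ∑' n, W * a n ^ p := by gcongr with n; exact hcol n
    _ = W ^ p * ∑' n, a n ^ p := by
        rw [ENNReal.tsum_mul_left, ← mul_assoc]
        congr 1
        nth_rewrite 2 [← rpow_one W]
        rw [← rpow_add_of_nonneg _ _ (by linarith) zero_le_one, sub_add_cancel]

theorem tsum_rpow_tsum_int_sub_mul_le (k : ℤ → ℝ≥0∞) (a : ℕ → ℝ≥0∞) {p : ℝ} (hp : 1 ≤ p) :
    ∑' m : ℕ, (∑' n : ℕ, k (m - n) * a n) ^ p ≤ (∑' z, k z) ^ p * ∑' n, a n ^ p :=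
  tsum_rpow_tsum_mul_le (fun m n : ℕ => k (m - n)) a
    (fun m => tsum_comp_le_tsum_of_injective (fun _ _ h => by simpa using h) k)
    (fun n => tsum_comp_le_tsum_of_injective (fun _ _ h => by simpa using h) k) hp

end ENNReal

section Bessel

variable {𝕜 E ι : Type*} [RCLike 𝕜] [NormedAddCommGroup E] [InnerProductSpace 𝕜 E]

theorem norm_sum_smul_sq_le_of_bessel {e : ι → E} {B : ℝ} (hB₀ : 0 ≤ B)
    (hB : ∀ (f : E) (s : Finset ι), ∑ n ∈ s, ‖(inner 𝕜 f (e n) : 𝕜)‖ ^ 2 ≤ B * ‖f‖ ^ 2)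
    (c : ι → 𝕜) (s : Finset ι) :
    ‖∑ n ∈ s, c n • e n‖ ^ 2 ≤ B * ∑ n ∈ s, ‖c n‖ ^ 2 := by
  set v := ∑ n ∈ s, c n • e n
  have hv : ‖v‖ ^ 2 ≤ ∑ n ∈ s, ‖c n‖ * ‖(inner 𝕜 v (e n) : 𝕜)‖ :=
    calc ‖v‖ ^ 2 = RCLike.re (inner 𝕜 v v : 𝕜) := (inner_self_eq_norm_sq v).symm
      _ = RCLike.re (∑ n ∈ s, c n * inner 𝕜 v (e n)) := by simp only [v, inner_sum, inner_smul_right]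
      _ ≤ ‖∑ n ∈ s, c n * inner 𝕜 v (e n)‖ := RCLike.re_le_norm _
      _ ≤ ∑ n ∈ s, ‖c n‖ * ‖(inner 𝕜 v (e n) : 𝕜)‖ := by
        simpa only [norm_mul] using norm_sum_le s fun n => c n * inner 𝕜 v (e n)
  have hsq : ‖v‖ ^ 2 * ‖v‖ ^ 2 ≤ (B * ∑ n ∈ s, ‖c n‖ ^ 2) * ‖v‖ ^ 2 :=
    calc ‖v‖ ^ 2 * ‖v‖ ^ 2 ≤ (∑ n ∈ s, ‖c n‖ * ‖(inner 𝕜 v (e n) : 𝕜)‖) ^ 2 := by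
          rw [← sq]; gcongr
      _ ≤ (∑ n ∈ s, ‖c n‖ ^ 2) * ∑ n ∈ s, ‖(inner 𝕜 v (e n) : 𝕜)‖ ^ 2 :=
          Finset.sum_mul_sq_le_sq_mul_sq s _ _
      _ ≤ (∑ n ∈ s, ‖c n‖ ^ 2) * (B * ‖v‖ ^ 2) := by gcongr; exact hB v s
      _ = (B * ∑ n ∈ s, ‖c n‖ ^ 2) * ‖v‖ ^ 2 := by ring
  rcases (sq_nonneg ‖v‖).eq_or_lt with hv0 | hv0
  · rw [← hv0]; positivity
  · exact le_of_mul_le_mul_right hsq hv0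

theorem summable_smul_of_bessel [CompleteSpace E] {e : ι → E} {B : ℝ} (hB₀ : 0 ≤ B)
    (hB : ∀ (f : E) (s : Finset ι), ∑ n ∈ s, ‖(inner 𝕜 f (e n) : 𝕜)‖ ^ 2 ≤ B * ‖f‖ ^ 2)
    {c : ι → 𝕜} (hc : Summable fun n => ‖c n‖ ^ 2) :
    Summable fun n => c n • e n := by
  rw [summable_iff_vanishing_norm]
  intro ε hε
  obtain ⟨s, hs⟩ := summable_iff_vanishing_norm.mp hc (ε ^ 2 / (B + 1)) (by positivity)
  refine ⟨s, fun t ht => pow_lt_pow_iff_left₀ (norm_nonneg _) hε.le two_ne_zero |>.mp ?_⟩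
  have htail : ∑ n ∈ t, ‖c n‖ ^ 2 < ε ^ 2 / (B + 1) :=
    (Real.le_norm_self _).trans_lt (hs t ht)
  calc ‖∑ n ∈ t, c n • e n‖ ^ 2 ≤ B * ∑ n ∈ t, ‖c n‖ ^ 2 :=
        norm_sum_smul_sq_le_of_bessel hB₀ hB c t
    _ ≤ (B + 1) * ∑ n ∈ t, ‖c n‖ ^ 2 := by gcongr; linarith
    _ < (B + 1) * (ε ^ 2 / (B + 1)) := by gcongr
    _ = ε ^ 2 := by field_simp

theorem enorm_inner_le_tsum_of_hasSum {e : ι → E} {c : ι → 𝕜} {y : E}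
    (hy : HasSum (fun n => c n • e n) y) (x : E) :
    ‖(inner 𝕜 y x : 𝕜)‖ₑ ≤ ∑' n, ‖c n‖ₑ * ‖(inner 𝕜 (e n) x : 𝕜)‖ₑ := by
  have hx : HasSum (fun n => c n * inner 𝕜 x (e n)) (inner 𝕜 x y) := by
    simpa only [innerSL_apply_apply, inner_smul_right] using (innerSL 𝕜 x).hasSum hy
  calc ‖(inner 𝕜 y x : 𝕜)‖ₑ = ‖(inner 𝕜 x y : 𝕜)‖ₑ := by
        simp only [← ofReal_norm, norm_inner_symm]
    _ ≤ ∑' n, ‖c n * inner 𝕜 x (e n)‖ₑ := hx.tsum_eq ▸ enorm_tsum_le_tsum_enorm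
    _ = ∑' n, ‖c n‖ₑ * ‖(inner 𝕜 (e n) x : 𝕜)‖ₑ := by
        refine tsum_congr fun n => ?_
        rw [enorm_mul, ← ofReal_norm (inner 𝕜 x _), ← ofReal_norm (inner 𝕜 _ x), norm_inner_symm]

theorem ofReal_norm_inner_mul_le_tsum {e : ι → E} {c : ι → 𝕜} {y : E}
    (hy : HasSum (fun n => c n • e n) y) (x : E) {k ν' : ι → ℝ} {ν : ℝ}
    (hν' : ∀ n, 0 ≤ ν' n) (hloc : ∀ n, ‖(inner 𝕜 (e n) x : 𝕜)‖ * ν ≤ k n * ν' n) :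
    ENNReal.ofReal (‖(inner 𝕜 y x : 𝕜)‖ * ν)
      ≤ ∑' n, ENNReal.ofReal (k n) * ENNReal.ofReal (‖c n‖ * ν' n) := by
  calc ENNReal.ofReal (‖(inner 𝕜 y x : 𝕜)‖ * ν) = ‖(inner 𝕜 y x : 𝕜)‖ₑ * ENNReal.ofReal ν := by
        rw [ENNReal.ofReal_mul (norm_nonneg _), ofReal_norm]
    _ ≤ (∑' n, ‖c n‖ₑ * ‖(inner 𝕜 (e n) x : 𝕜)‖ₑ) * ENNReal.ofReal ν := by
        gcongr; exact enorm_inner_le_tsum_of_hasSum hy x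
    _ = ∑' n, ‖c n‖ₑ * ENNReal.ofReal (‖(inner 𝕜 (e n) x : 𝕜)‖ * ν) := by
        rw [← ENNReal.tsum_mul_right]
        refine tsum_congr fun n => ?_
        rw [ENNReal.ofReal_mul (norm_nonneg _), ofReal_norm, mul_assoc]
    _ ≤ ∑' n, ‖c n‖ₑ * ENNReal.ofReal (k n * ν' n) :=
        ENNReal.tsum_le_tsum fun n => by have := hloc n; gcongr
    _ = ∑' n, ENNReal.ofReal (k n) * ENNReal.ofReal (‖c n‖ * ν' n) := by
        refine tsum_congr fun n => ?_
        rw [ENNReal.ofReal_mul' (hν' n), ENNReal.ofReal_mul (norm_nonneg _), ofReal_norm]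
        ring

end Bessel

theorem summable_rpow_and_tsum_rpow_le_of_ofReal {ι κ : Type*} {f : ι → ℝ} {g : κ → ℝ} {p K : ℝ}
    (hf : ∀ m, 0 ≤ f m) (hg : ∀ n, 0 ≤ g n) (hp : 0 ≤ p) (hK : 0 ≤ K)
    (hgp : Summable fun n => g n ^ p)
    (h : ∑' m, ENNReal.ofReal (f m) ^ p ≤ ENNReal.ofReal K ^ p * ∑' n, ENNReal.ofReal (g n) ^ p) :
    Summable (fun m => f m ^ p) ∧ ∑' m, f m ^ p ≤ K ^ p * ∑' n, g n ^ p := by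
  simp only [ENNReal.ofReal_rpow_of_nonneg (hf _) hp, ENNReal.ofReal_rpow_of_nonneg (hg _) hp,
    ENNReal.ofReal_rpow_of_nonneg hK hp] at h
  rw [← ENNReal.ofReal_tsum_of_nonneg (fun n => rpow_nonneg (hg n) p) hgp,
    ← ENNReal.ofReal_mul (by positivity)] at h
  have hfp : Summable fun m => f m ^ p :=
    (ENNReal.summable_toReal (ne_top_of_le_ne_top ENNReal.ofReal_ne_top h)).congr
      fun m => ENNReal.toReal_ofReal (rpow_nonneg (hf m) p)
  refine ⟨hfp, ?_⟩
  rwa [← ENNReal.ofReal_tsum_of_nonneg (fun m => rpow_nonneg (hf m) p) hfp,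
    ENNReal.ofReal_le_ofReal_iff
      (mul_nonneg (rpow_nonneg hK p) (tsum_nonneg fun n => rpow_nonneg (hg n) p))] at h

theorem stmt_17_general {H : Type*} [NormedAddCommGroup H] [InnerProductSpace ℂ H]
    [CompleteSpace H]
    (gd : ℕ → H)
    (e : ℕ → H)
    (hframe : ∃ A B : ℝ, 0 < A ∧ A ≤ B ∧ ∀ f : H,
      Summable (fun n : ℕ => ‖(inner ℂ f (e n) : ℂ)‖ ^ 2) ∧
      A * ‖f‖ ^ 2 ≤ ∑' n : ℕ, ‖(inner ℂ f (e n) : ℂ)‖ ^ 2 ∧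
      ∑' n : ℕ, ‖(inner ℂ f (e n) : ℂ)‖ ^ 2 ≤ B * ‖f‖ ^ 2)
    (β γ C : ℝ) (hβ₀ : 0 < β) (hγ : 0 < γ) (hC : 0 < C)
    (hloc2 : ∀ m n : ℕ,
      ‖(inner ℂ (e m) (gd n) : ℂ)‖ ≤ C * Real.exp (-γ * |(m:ℝ) - (n:ℝ)| ^ β))
    (μ : ℝ → ℝ) (hμpos : ∀ x, 0 < μ x)
    (βμ : ℝ) (hβμ₀ : 0 < βμ) (hβμβ : βμ < β)
    (hsub : ∃ Cμ > (0:ℝ), ∃ γ' > (0:ℝ), ∀ t x : ℝ,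
      μ (t + x) ≤ Cμ * Real.exp (γ' * |t| ^ βμ) * μ x)
    (p : ℝ) (hp : 1 ≤ p) :
    ∃ K > (0:ℝ), ∀ c : ℕ → ℂ,
      Summable (fun n : ℕ => ‖c n‖ ^ 2) →
      Summable (fun n : ℕ => ‖c n‖ ^ p * μ ((n:ℝ) + 1) ^ p) →
      ∃ y : H, HasSum (fun n : ℕ => c n • e n) y ∧
        Summable (fun m : ℕ => ‖(inner ℂ y (gd m) : ℂ)‖ ^ p * μ ((m:ℝ) + 1) ^ p) ∧
        ∑' m : ℕ, ‖(inner ℂ y (gd m) : ℂ)‖ ^ p * μ ((m:ℝ) + 1) ^ p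
          ≤ K ^ p * ∑' n : ℕ, ‖c n‖ ^ p * μ ((n:ℝ) + 1) ^ p := by
  obtain ⟨A, B, hA, hAB, hframe⟩ := hframe
  obtain ⟨Cμ, hCμ, γ', -, hsub⟩ := hsub
  obtain ⟨L, hL, hμL⟩ :=
    exists_exp_neg_rpow_mul_le_of_subexponential hμpos hCμ hβμ₀ hβμβ hγ hsub
  set k : ℤ → ℝ := fun z => C * L * Real.exp (-(γ / 2) * |(z : ℝ)| ^ β)
  set W := ∑' z, ENNReal.ofReal (k z)
  have hW : W ≠ ⊤ :=
    ((summable_exp_neg_mul_abs_int_rpow (half_pos hγ) hβ₀).mul_left (C * L)).tsum_ofReal_ne_top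
  have hW₀ : 0 < W.toReal := by
    refine ENNReal.toReal_pos (ne_of_gt ?_) hW
    exact (ENNReal.ofReal_pos.mpr (by positivity : 0 < k 0)).trans_le (ENNReal.le_tsum 0)
  refine ⟨W.toReal, hW₀, fun c hc hcμ => ?_⟩
  have hbessel (f : H) (s : Finset ℕ) : ∑ n ∈ s, ‖(inner ℂ f (e n) : ℂ)‖ ^ 2 ≤ B * ‖f‖ ^ 2 :=
    ((hframe f).1.sum_le_tsum s fun n _ => by positivity).trans (hframe f).2.2
  obtain ⟨y, hy⟩ := summable_smul_of_bessel (hA.le.trans hAB) hbessel hc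
  refine ⟨y, hy, ?_⟩
  have hloc (m n : ℕ) :
      ‖(inner ℂ (e n) (gd m) : ℂ)‖ * μ ((m:ℝ) + 1) ≤ k (m - n) * μ ((n:ℝ) + 1) := by
    convert mul_le_mul_exp_neg_rpow_of_le hμpos hC.le hμL
      (s := (m:ℝ) + 1) (t := (n:ℝ) + 1) ((hloc2 n m).trans_eq (by rw [add_sub_add_right_eq_sub]))
      using 5
    push_cast
    rw [add_sub_add_right_eq_sub]
  have hpow (z : ℂ) (x : ℝ) : ‖z‖ ^ p * μ x ^ p = (‖z‖ * μ x) ^ p :=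
    (Real.mul_rpow (norm_nonneg z) (hμpos x).le).symm
  simp only [hpow] at hcμ ⊢
  refine summable_rpow_and_tsum_rpow_le_of_ofReal (fun m => by have := hμpos ((m:ℝ) + 1); positivity)
    (fun n => by have := hμpos ((n:ℝ) + 1); positivity) (by linarith) hW₀.le hcμ ?_
  rw [ENNReal.ofReal_toReal hW]
  refine (ENNReal.tsum_le_tsum fun m => ENNReal.rpow_le_rpow ?_ (by linarith)).trans
    (ENNReal.tsum_rpow_tsum_int_sub_mul_le _ _ hp)
  exact ofReal_norm_inner_mul_le_tsum hy (gd m) (fun n => (hμpos _).le) (hloc m)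

/-- Synthesis operator boundedness: if a frame `(e_n)` is `β`-sub-exponentially (or
exponentially) localized with respect to a Riesz basis `(g_n)` with canonical dual
`(g̃_n)`, and `μ` is a `β_μ`-sub-exponential weight with `β_μ < β` and `μ(n) ≥ 1`,
then the synthesis operator `(c_n) ↦ Σ c_n e_n` maps `ℓ^p_μ` boundedly into
`H_G^{ℓ^p_μ}`. -/
theorem stmt_17 {H : Type*} [NormedAddCommGroup H] [InnerProductSpace ℂ H]
    [CompleteSpace H]
    (u : HilbertBasis ℕ ℂ H) (T : H →L[ℂ] H) (hT : Function.Bijective T)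
    (g : ℕ → H) (hg : ∀ n, g n = T (u n))
    (gd : ℕ → H)
    (hbi : ∀ m n : ℕ, (inner ℂ (g m) (gd n) : ℂ) = if m = n then 1 else 0)
    (hexp : ∀ f : H, HasSum (fun n : ℕ => (inner ℂ f (gd n) : ℂ) • g n) f)
    (e : ℕ → H)
    (hframe : ∃ A B : ℝ, 0 < A ∧ A ≤ B ∧ ∀ f : H,
      Summable (fun n : ℕ => ‖(inner ℂ f (e n) : ℂ)‖ ^ 2) ∧
      A * ‖f‖ ^ 2 ≤ ∑' n : ℕ, ‖(inner ℂ f (e n) : ℂ)‖ ^ 2 ∧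
      ∑' n : ℕ, ‖(inner ℂ f (e n) : ℂ)‖ ^ 2 ≤ B * ‖f‖ ^ 2)
    (β γ C : ℝ) (hβ₀ : 0 < β) (hβ₁ : β ≤ 1) (hγ : 0 < γ) (hC : 0 < C)
    (hloc1 : ∀ m n : ℕ,
      ‖(inner ℂ (e m) (g n) : ℂ)‖ ≤ C * Real.exp (-γ * |(m:ℝ) - (n:ℝ)| ^ β))
    (hloc2 : ∀ m n : ℕ,
      ‖(inner ℂ (e m) (gd n) : ℂ)‖ ≤ C * Real.exp (-γ * |(m:ℝ) - (n:ℝ)| ^ β))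
    (μ : ℝ → ℝ) (hμpos : ∀ x, 0 < μ x) (hμcont : Continuous μ)
    (βμ : ℝ) (hβμ₀ : 0 < βμ) (hβμ₁ : βμ < 1) (hβμβ : βμ < β)
    (hsub : ∃ Cμ > (0:ℝ), ∃ γ' > (0:ℝ), ∀ t x : ℝ,
      μ (t + x) ≤ Cμ * Real.exp (γ' * |t| ^ βμ) * μ x)
    (hμ1 : ∀ n : ℕ, 1 ≤ μ ((n:ℝ) + 1))
    (p : ℝ) (hp : 1 ≤ p) :
    ∃ K > (0:ℝ), ∀ c : ℕ → ℂ,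
      Summable (fun n : ℕ => ‖c n‖ ^ 2) →
      Summable (fun n : ℕ => ‖c n‖ ^ p * μ ((n:ℝ) + 1) ^ p) →
      ∃ y : H, HasSum (fun n : ℕ => c n • e n) y ∧
        Summable (fun m : ℕ => ‖(inner ℂ y (gd m) : ℂ)‖ ^ p * μ ((m:ℝ) + 1) ^ p) ∧
        ∑' m : ℕ, ‖(inner ℂ y (gd m) : ℂ)‖ ^ p * μ ((m:ℝ) + 1) ^ p
          ≤ K ^ p * ∑' n : ℕ, ‖c n‖ ^ p * μ ((n:ℝ) + 1) ^ p :=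
  stmt_17_general gd e hframe β γ C hβ₀ hγ hC hloc2 μ hμpos βμ hβμ₀ hβμβ hsub p hp
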